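/- Let w : {0,…,n}×{0,…,m} → ℝ be a mesh function satisfying, for all interior k ∈ {1,…,n−1} and all j < m, the discrete dorsal-closure scheme (D_t w)^j_k = (1/(1 + ((D₀w)^j_k)²)) · ( (D²w)^j_k + (D₀w)^j_k / L[w^j] ). If (δu)² ≥ 2δt and 2ρ₀ ≥ δu, then for every j < m, max_{0≤k≤n} |w^{j+1}_k| ≤ max{ max_{0≤k≤n} |w^j_k|, |w^{j+1}_0|, |w^{j+1}_n| }. -/

import Mathlib

/-! At an interior node the scheme is the explicit update
`w^{j+1}_k = (α + β) w^j_{k+1} + (1 - 2α) w^j_k + (α - β) w^j_{k-1}` with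
`α = δt / ((1 + p²) δu²)`, `β = δt / ((1 + p²) 2δu L)`, `p = (D₀w)^j_k`, `L = L[w^j]`.
Since `L[w^j] ≥ nδu ≥ δu` and `δu² ≥ 2δt`, the three coefficients are nonnegative and sum to `1`,
so every interior value at time `j + 1` is bounded by `max_k |w^j_k|`; the boundary values are
bounded by themselves. -/

noncomputable section

open Finset

/-- The forward difference operator `(D₊v)_k = (v_{k+1} - v_k)/δu`. -/
def dplus (δu : ℝ) (v : ℕ → ℝ) (k : ℕ) : ℝ := (v (k + 1) - v k) / δu

/-- The centred difference operator `(D₀v)_k = (v_{k+1} - v_{k-1})/(2δu)`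
(used only at interior indices `k ≥ 1`). -/
def d0 (δu : ℝ) (v : ℕ → ℝ) (k : ℕ) : ℝ := (v (k + 1) - v (k - 1)) / (2 * δu)

/-- The second difference operator
`(D²v)_k = (v_{k+1} - 2v_k + v_{k-1})/δu²`. -/
def d2 (δu : ℝ) (v : ℕ → ℝ) (k : ℕ) : ℝ :=
  (v (k + 1) - 2 * v k + v (k - 1)) / δu ^ 2

/-- The forward time difference operator `(D_t w)^j_k = (w^{j+1}_k - w^j_k)/δt`
for a mesh function `w` (time index first). -/
def dtime (δt : ℝ) (w : ℕ → ℕ → ℝ) (j k : ℕ) : ℝ := (w (j + 1) k - w j k) / δt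

/-- The discrete length functional
`L[v] = δu Σ_{i<n} √(1 + ((D₊v)_i)²)`. -/
def dlen (δu : ℝ) (n : ℕ) (v : ℕ → ℝ) : ℝ :=
  δu * ∑ i ∈ Finset.range n, Real.sqrt (1 + dplus δu v i ^ 2)

/-- The discrete sup-norm (maximum of absolute values) over a finite set of
spatial indices. -/
def supOn (s : Finset ℕ) (v : ℕ → ℝ) : ℝ := s.fold max 0 (fun k => |v k|)

lemma le_supOn {s : Finset ℕ} {k : ℕ} (v : ℕ → ℝ) (hk : k ∈ s) : |v k| ≤ supOn s v :=
  (Finset.le_fold_max _).2 (Or.inr ⟨k, hk, le_rfl⟩)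

lemma supOn_le_iff {s : Finset ℕ} {v : ℕ → ℝ} {R : ℝ} :
    supOn s v ≤ R ↔ 0 ≤ R ∧ ∀ k ∈ s, |v k| ≤ R :=
  fold_max_le R

lemma mul_le_dlen {δu : ℝ} (hδu : 0 ≤ δu) (n : ℕ) (v : ℕ → ℝ) : n * δu ≤ dlen δu n v := by
  have h : ∀ i ∈ range n, (1 : ℝ) ≤ √(1 + dplus δu v i ^ 2) := fun i _ =>
    Real.one_le_sqrt.2 (le_add_of_nonneg_right (sq_nonneg _))
  calc (n : ℝ) * δu = δu * ∑ _i ∈ range n, (1 : ℝ) := by simp [mul_comm]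
    _ ≤ dlen δu n v := mul_le_mul_of_nonneg_left (sum_le_sum h) hδu

lemma abs_add_add_le_of_convex {a b c x y z M : ℝ} (ha : 0 ≤ a) (hb : 0 ≤ b) (hc : 0 ≤ c)
    (habc : a + b + c = 1) (hx : |x| ≤ M) (hy : |y| ≤ M) (hz : |z| ≤ M) :
    |a * x + b * y + c * z| ≤ M := by
  calc |a * x + b * y + c * z| ≤ |a * x| + |b * y| + |c * z| := abs_add_three _ _ _
    _ = a * |x| + b * |y| + c * |z| := by
        rw [abs_mul, abs_mul, abs_mul, abs_of_nonneg ha, abs_of_nonneg hb, abs_of_nonneg hc]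
    _ ≤ a * M + b * M + c * M := by gcongr
    _ = M := by rw [← add_mul, ← add_mul, habc, one_mul]

section SchemeStep

variable {δt δu L : ℝ} {w : ℕ → ℕ → ℝ} {j k : ℕ}

lemma eq_of_dtime_eq {α β : ℝ} (hδt : δt ≠ 0)
    (hα : α = δt / ((1 + d0 δu (w j) k ^ 2) * δu ^ 2))
    (hβ : β = δt / ((1 + d0 δu (w j) k ^ 2) * (2 * δu * L)))
    (h : dtime δt w j k =
      (1 + d0 δu (w j) k ^ 2)⁻¹ * (d2 δu (w j) k + d0 δu (w j) k / L)) :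
    w (j + 1) k = (α + β) * w j (k + 1) + (1 - 2 * α) * w j k + (α - β) * w j (k - 1) := by
  rw [dtime, div_eq_iff hδt] at h
  generalize 1 + d0 δu (w j) k ^ 2 = q at h hα hβ
  rw [d2, d0] at h
  rw [hα, hβ]
  linear_combination h

lemma abs_le_of_dtime_eq {M : ℝ} (hδt : 0 < δt) (hδu : 0 < δu) (hL : δu ≤ 2 * L)
    (hstep : 2 * δt ≤ δu ^ 2) (hprev : |w j (k - 1)| ≤ M) (hcur : |w j k| ≤ M)
    (hnext : |w j (k + 1)| ≤ M)
    (h : dtime δt w j k =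
      (1 + d0 δu (w j) k ^ 2)⁻¹ * (d2 δu (w j) k + d0 δu (w j) k / L)) :
    |w (j + 1) k| ≤ M := by
  set q := 1 + d0 δu (w j) k ^ 2
  have hq1 : 1 ≤ q := le_add_of_nonneg_right (sq_nonneg _)
  have hL0 : 0 < L := by linarith
  set α := δt / (q * δu ^ 2) with hα
  set β := δt / (q * (2 * δu * L)) with hβ
  have hβ0 : 0 ≤ β := by positivity
  have hβα : β ≤ α := div_le_div_of_nonneg_left hδt.le (by positivity)
    (mul_le_mul_of_nonneg_left (by nlinarith) (by positivity))
  have h2α : 2 * α ≤ 1 := by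
    rw [hα, mul_div_assoc', div_le_one (by positivity)]
    nlinarith
  rw [eq_of_dtime_eq hδt.ne' hα hβ h]
  exact abs_add_add_le_of_convex (by linarith) (by linarith) (by linarith) (by ring)
    hnext hcur hprev

end SchemeStep

theorem discrete_scheme_sup_bound_general (ρ₀ T : ℝ) (hρ : 0 < ρ₀) (hT : 0 < T)
    (n m : ℕ) (hn : 0 < n) (hm : 0 < m) (w : ℕ → ℕ → ℝ)
    (hscheme : ∀ j, j < m → ∀ k, 0 < k → k < n →
      dtime (T / m) w j k =
        (1 + d0 (ρ₀ / n) (w j) k ^ 2)⁻¹ *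
          (d2 (ρ₀ / n) (w j) k + d0 (ρ₀ / n) (w j) k / dlen (ρ₀ / n) n (w j)))
    (hstep : (ρ₀ / n) ^ 2 ≥ 2 * (T / m)) :
    ∀ j, j < m →
      supOn (Finset.range (n + 1)) (w (j + 1)) ≤
        max (supOn (Finset.range (n + 1)) (w j))
          (max |w (j + 1) 0| |w (j + 1) n|) := by
  intro j hj
  have hδu : 0 < ρ₀ / n := div_pos hρ (Nat.cast_pos.2 hn)
  have hδt : 0 < T / m := div_pos hT (Nat.cast_pos.2 hm)
  have hlen : ρ₀ / n ≤ 2 * dlen (ρ₀ / n) n (w j) := by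
    have hbase := mul_le_dlen hδu.le n (w j)
    have hn1 : (1 : ℝ) ≤ n := Nat.one_le_cast.2 hn
    nlinarith
  have hold : ∀ i ≤ n, |w j i| ≤ supOn (range (n + 1)) (w j) := fun i hi =>
    le_supOn (w j) (mem_range_succ_iff.2 hi)
  refine supOn_le_iff.2 ⟨(abs_nonneg _).trans ((le_max_left _ _).trans (le_max_right _ _)),
    fun k hk => ?_⟩
  rcases Nat.eq_zero_or_pos k with rfl | hk0
  · exact (le_max_left _ _).trans (le_max_right _ _)
  rcases (mem_range_succ_iff.1 hk).eq_or_lt with rfl | hkn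
  · exact (le_max_right _ _).trans (le_max_right _ _)
  exact (abs_le_of_dtime_eq hδt hδu hlen hstep (hold _ (by omega)) (hold _ hkn.le)
    (hold _ hkn) (hscheme j hj k hk0 hkn)).trans (le_max_left _ _)

/-- Theorem 6.4, sup bound for the numeric scheme: if `w`
solves the discrete dorsal-closure scheme at all interior indices, and the step
sizes satisfy `δu² ≥ 2δt` and `2ρ₀ ≥ δu`, then
`max_k |w^{j+1}_k| ≤ max{max_k |w^j_k|, |w^{j+1}_0|, |w^{j+1}_n|}`. -/
theorem discrete_scheme_sup_bound (ρ₀ T : ℝ) (hρ : 0 < ρ₀) (hT : 0 < T)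
    (n m : ℕ) (hn : 0 < n) (hm : 0 < m) (w : ℕ → ℕ → ℝ)
    (hscheme : ∀ j, j < m → ∀ k, 0 < k → k < n →
      dtime (T / m) w j k =
        (1 + d0 (ρ₀ / n) (w j) k ^ 2)⁻¹ *
          (d2 (ρ₀ / n) (w j) k + d0 (ρ₀ / n) (w j) k / dlen (ρ₀ / n) n (w j)))
    (hstep : (ρ₀ / n) ^ 2 ≥ 2 * (T / m))
    (hsmall : 2 * ρ₀ ≥ ρ₀ / n) :
    ∀ j, j < m →
      supOn (Finset.range (n + 1)) (w (j + 1)) ≤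
        max (supOn (Finset.range (n + 1)) (w j))
          (max |w (j + 1) 0| |w (j + 1) n|) :=
  discrete_scheme_sup_bound_general ρ₀ T hρ hT n m hn hm w hscheme hstep
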